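/- Let P and Q be monotone-constraint programs with At(P) ∪ At(Q) finite. Then P and Q are uniformly equivalent if and only if UE(P) = UE(Q). -/

import Mathlib

universe u

/-- A constraint `A = (X, C)`: domain `X` and a family `C` of subsets of `X`. -/
structure Constraint (α : Type u) where
  dom : Set α
  sat : Set (Set α)
  sat_sub : ∀ Y ∈ sat, Y ⊆ dom

/-- `M ⊨ A` iff `M ∩ Dom(A) ∈ C`. -/
def Constraint.Sat {α : Type u} (M : Set α) (A : Constraint α) : Prop :=
  M ∩ A.dom ∈ A.sat

/-- A constraint is monotone if its satisfying family is closed under supersets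
within the domain. -/
def Constraint.Mono {α : Type u} (A : Constraint α) : Prop :=
  ∀ W Y : Set α, W ∈ A.sat → W ⊆ Y → Y ⊆ A.dom → Y ∈ A.sat

/-- A rule `A ← A₁,…,A_k, not(A_{k+1}),…,not(A_m)`. -/
structure Rule (α : Type u) where
  head : Constraint α
  pos : Set (Constraint α)
  neg : Set (Constraint α)

/-- A constraint program is a set of rules. -/
abbrev Program (α : Type u) := Set (Rule α)

def Rule.Horn {α : Type u} (r : Rule α) : Prop := r.neg = ∅

def Rule.Mono {α : Type u} (r : Rule α) : Prop :=
  r.head.Mono ∧ (∀ A ∈ r.pos, A.Mono) ∧ (∀ A ∈ r.neg, A.Mono)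

def Program.Horn {α : Type u} (P : Program α) : Prop := ∀ r ∈ P, r.Horn

def Program.Mono {α : Type u} (P : Program α) : Prop := ∀ r ∈ P, r.Mono

/-- `M` satisfies the body of `r`. -/
def Rule.BodySat {α : Type u} (M : Set α) (r : Rule α) : Prop :=
  (∀ A ∈ r.pos, Constraint.Sat M A) ∧ (∀ A ∈ r.neg, ¬ Constraint.Sat M A)

/-- `P(M)`: the set of `M`-applicable rules of `P`. -/
def Program.app {α : Type u} (P : Program α) (M : Set α) : Program α :=
  {r ∈ P | r.BodySat M}

/-- `hset(r) = Dom(hd(r))`. -/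
def Rule.hset {α : Type u} (r : Rule α) : Set α := r.head.dom

/-- `hset(P)`: union of the headsets of rules of `P`. -/
def Program.hset {α : Type u} (P : Program α) : Set α := ⋃ r ∈ P, r.hset

def Rule.atoms {α : Type u} (r : Rule α) : Set α :=
  r.head.dom ∪ (⋃ A ∈ r.pos, A.dom) ∪ (⋃ A ∈ r.neg, A.dom)

/-- `At(P)`: atoms occurring in domains of constraints of `P`. -/
def Program.atoms {α : Type u} (P : Program α) : Set α := ⋃ r ∈ P, r.atoms

/-- `M` is a model of `P`. -/
def Program.IsModel {α : Type u} (P : Program α) (M : Set α) : Prop :=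
  ∀ r ∈ P, r.BodySat M → Constraint.Sat M r.head

/-- `M` is a supported model of `P`. -/
def Program.Supported {α : Type u} (P : Program α) (M : Set α) : Prop :=
  P.IsModel M ∧ M ⊆ (P.app M).hset

/-- The nondeterministic one-step provability operator `T_P^nd`. -/
def Program.Tnd {α : Type u} (P : Program α) (M : Set α) : Set (Set α) :=
  {M' | M' ⊆ (P.app M).hset ∧ ∀ r ∈ P.app M, Constraint.Sat M' r.head}

/-- A `P`-computation: a transfinite sequence starting at `∅`, increasing, with
each successor step nondeterministically one-step provable, continuous at limits. -/
structure PComputation {α : Type u} (P : Program α) where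
  X : Ordinal.{u} → Set α
  zero : X 0 = ∅
  incr : ∀ o, X o ⊆ X (o + 1)
  step : ∀ o, X (o + 1) ∈ P.Tnd (X o)
  limit : ∀ o : Ordinal.{u}, Order.IsSuccLimit o → X o = ⋃ β < o, X β

/-- The result `R_t` of a computation. -/
def PComputation.result {α : Type u} {P : Program α} (t : PComputation P) : Set α :=
  ⋃ o, t.X o

/-- `M` is a derivable model of `P`: the result of some `P`-computation. -/
def Program.Derivable {α : Type u} (P : Program α) (M : Set α) : Prop :=
  ∃ t : PComputation P, t.result = M

/-- The canonical sequence `t^{P,M}`: `X₀ = ∅`, `X_{β+1} = hset(P(X_β)) ∩ M`,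
unions at limits. -/
noncomputable def canSeq {α : Type u} (P : Program α) (M : Set α) (o : Ordinal.{u}) :
    Set α :=
  Ordinal.limitRecOn o ∅ (fun _ ih => (P.app ih).hset ∩ M)
    (fun o _ ih => ⋃ β : Ordinal.{u}, ⋃ h : β < o, ih β h)

/-- `Can(P,M)`: the result of the canonical computation. -/
noncomputable def Can {α : Type u} (P : Program α) (M : Set α) : Set α :=
  ⋃ o, canSeq P M o

/-- The reduct of a single rule: drop negated literals. -/
def Rule.pos_part {α : Type u} (r : Rule α) : Rule α := ⟨r.head, r.pos, ∅⟩

/-- The reduct `P^M`. -/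
def Program.reduct {α : Type u} (P : Program α) (M : Set α) : Program α :=
  {r' | ∃ r ∈ P, (∀ A ∈ r.neg, ¬ Constraint.Sat M A) ∧ r' = r.pos_part}

/-- `M` is a stable model of `P`: a derivable model of the reduct `P^M`. -/
def Program.Stable {α : Type u} (P : Program α) (M : Set α) : Prop :=
  (P.reduct M).Derivable M

/-- `N ⊨_M P`: `N` is an `M`-maximal model of the Horn program `P`. -/
def Program.MMax {α : Type u} (P : Program α) (M N : Set α) : Prop :=
  N ⊆ M ∧ P.IsModel N ∧ M ∩ (P.app N).hset ⊆ N

/-- `(X,Y)` is an SE-model of `P`. -/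
def Program.SE {α : Type u} (P : Program α) (X Y : Set α) : Prop :=
  X ⊆ Y ∧ P.IsModel Y ∧ (P.reduct Y).MMax Y X

/-- `(X,Y)` is a UE-model of `P`. -/
def Program.UE {α : Type u} (P : Program α) (X Y : Set α) : Prop :=
  P.SE X Y ∧ ∀ X', P.SE X' Y → X ⊆ X' → X = X' ∨ X' = Y

/-- Strong equivalence of monotone-constraint programs. -/
def StrongEq {α : Type u} (P Q : Program α) : Prop :=
  ∀ R : Program α, R.Mono → ∀ M : Set α, (P ∪ R).Stable M ↔ (Q ∪ R).Stable M

/-- The rule `(D,{D}) ←`. -/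
def factRule {α : Type u} (D : Set α) : Rule α :=
  ⟨⟨D, {D}, fun Y hY => by simp only [Set.mem_singleton_iff] at hY; simp [hY]⟩, ∅, ∅⟩

/-- Uniform equivalence of monotone-constraint programs. -/
def UnifEq {α : Type u} (P Q : Program α) : Prop :=
  ∀ D : Set α, ∀ M : Set α,
    (P ∪ {factRule D}).Stable M ↔ (Q ∪ {factRule D}).Stable M

/-- `P` is tight on `M`. -/
def Program.Tight {α : Type u} (P : Program α) (M : Set α) : Prop :=
  ∃ lam : α → Ordinal.{u}, ∀ r ∈ P.app M, ∀ x ∈ M ∩ r.hset,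
    ∀ a ∈ M ∩ (⋃ A ∈ r.pos, A.dom), lam a < lam x


/-!
A stable model `M` of a monotone program is characterized by its SE-models: `M` is a model and
`(M, M)` is its only SE-model of the form `(X, M)`. Adding the fact `D` keeps exactly the
SE-models `(X, M)` with `D ⊆ X`. Whether `(X, Y)` is an SE-model depends only on `Y` and on
`X ∩ At(P)`, so over finitely many atoms a maximal trace yields, above every SE-model `(X, Y)`
with `X ≠ Y`, a UE-model `(X', Y)` with `X' ≠ Y`. Hence stability of `P ∪ {(D,{D}) ←}` is
determined by the UE-models of `P`, which gives one direction; conversely, a UE-model `(X, Y)`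
of `P` is recovered from the stable models of `Q` by adding first the fact `X`, then the fact of
a UE-model of `Q` above it.
-/

variable {α : Type u}

namespace Constraint

theorem Sat.mono {C : Constraint α} (hC : C.Mono) {M N : Set α} (h : M ⊆ N) (hM : Sat M C) :
    Sat N C :=
  hC _ _ hM (Set.inter_subset_inter_left _ h) Set.inter_subset_right

theorem sat_congr_of_inter_eq {C : Constraint α} {S M N : Set α} (hS : C.dom ⊆ S)
    (h : M ∩ S = N ∩ S) : Sat M C ↔ Sat N C := by
  unfold Sat
  rw [← Set.inter_eq_right.mpr hS, ← Set.inter_assoc, h, Set.inter_assoc]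

end Constraint

namespace Rule

variable {r : Rule α}

theorem head_dom_subset_atoms : r.head.dom ⊆ r.atoms :=
  Set.subset_union_left.trans Set.subset_union_left

theorem dom_subset_atoms_of_mem_pos {A : Constraint α} (hA : A ∈ r.pos) : A.dom ⊆ r.atoms :=
  (Set.subset_biUnion_of_mem hA).trans (Set.subset_union_right.trans Set.subset_union_left)

theorem dom_subset_atoms_of_mem_neg {A : Constraint α} (hA : A ∈ r.neg) : A.dom ⊆ r.atoms :=
  (Set.subset_biUnion_of_mem hA).trans Set.subset_union_right

theorem atoms_pos_part_subset : r.pos_part.atoms ⊆ r.atoms :=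
  Set.union_subset_union_right _ (Set.iUnion₂_subset fun A hA => (Set.notMem_empty A hA).elim)

theorem bodySat_congr_of_inter_eq {S M N : Set α} (hr : r.atoms ⊆ S) (h : M ∩ S = N ∩ S) :
    r.BodySat M ↔ r.BodySat N :=
  and_congr
    (forall₂_congr fun _ hA =>
      Constraint.sat_congr_of_inter_eq ((dom_subset_atoms_of_mem_pos hA).trans hr) h)
    (forall₂_congr fun _ hA =>
      not_congr (Constraint.sat_congr_of_inter_eq ((dom_subset_atoms_of_mem_neg hA).trans hr) h))

end Rule

namespace Program

variable {P R : Program α}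

theorem head_dom_subset_hset {r : Rule α} (hr : r ∈ P) : r.head.dom ⊆ P.hset :=
  Set.subset_biUnion_of_mem (u := Rule.hset) hr

theorem hset_mono (h : P ⊆ R) : P.hset ⊆ R.hset :=
  Set.biUnion_subset_biUnion_left h

theorem atoms_subset_of_mem {r : Rule α} (hr : r ∈ P) : r.atoms ⊆ P.atoms :=
  Set.subset_biUnion_of_mem hr

theorem hset_subset_atoms : P.hset ⊆ P.atoms :=
  Set.iUnion₂_subset fun _ hr => Rule.head_dom_subset_atoms.trans (atoms_subset_of_mem hr)

theorem app_subset (M : Set α) : P.app M ⊆ P :=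
  Set.sep_subset _ _

theorem app_mono (hH : P.Horn) (hm : P.Mono) : Monotone P.app := fun _ _ h r ⟨hr, hpos, _⟩ =>
  ⟨hr, fun A hA => (hpos A hA).mono ((hm r hr).2.1 A hA) h,
    fun A hA => absurd (hH r hr ▸ hA) (Set.notMem_empty A)⟩

theorem Mono.union (hP : P.Mono) (hR : R.Mono) : (P ∪ R).Mono :=
  fun r hr => hr.elim (hP r) (hR r)

theorem reduct_horn (Y : Set α) : (P.reduct Y).Horn := by
  rintro _ ⟨r, -, -, rfl⟩
  rfl

theorem Mono.reduct (hP : P.Mono) (Y : Set α) : (P.reduct Y).Mono := by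
  rintro _ ⟨r, hr, -, rfl⟩
  exact ⟨(hP r hr).1, (hP r hr).2.1, fun A hA => (Set.notMem_empty A hA).elim⟩

theorem reduct_atoms_subset (Y : Set α) : (P.reduct Y).atoms ⊆ P.atoms := by
  refine Set.iUnion₂_subset ?_
  rintro _ ⟨r, hr, -, rfl⟩
  exact Rule.atoms_pos_part_subset.trans (atoms_subset_of_mem hr)

theorem isModel_reduct_iff {Y : Set α} : (P.reduct Y).IsModel Y ↔ P.IsModel Y := by
  constructor
  · intro h r hr hb
    exact h r.pos_part ⟨r, hr, hb.2, rfl⟩ ⟨hb.1, fun A hA => (Set.notMem_empty A hA).elim⟩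
  · rintro h _ ⟨r, hr, hneg, rfl⟩ hb
    exact h r hr ⟨hb.1, hneg⟩

theorem app_congr_of_inter_eq {S M N : Set α} (hS : P.atoms ⊆ S) (h : M ∩ S = N ∩ S) :
    P.app M = P.app N :=
  Set.sep_ext_iff.mpr fun _ hr =>
    Rule.bodySat_congr_of_inter_eq ((atoms_subset_of_mem hr).trans hS) h

theorem isModel_congr_of_inter_eq {S M N : Set α} (hS : P.atoms ⊆ S) (h : M ∩ S = N ∩ S) :
    P.IsModel M ↔ P.IsModel N :=
  forall₂_congr fun _ hr =>
    have hrS := (atoms_subset_of_mem hr).trans hS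
    imp_congr (Rule.bodySat_congr_of_inter_eq hrS h)
      (Constraint.sat_congr_of_inter_eq (Rule.head_dom_subset_atoms.trans hrS) h)

end Program

namespace PComputation

variable {P : Program α} (t : PComputation P)

theorem monotone : Monotone t.X := by
  intro o o' h
  induction o' using Ordinal.limitRecOn with
  | zero => rw [nonpos_iff_eq_zero.mp h]
  | add_one p ih =>
      rcases h.eq_or_lt with rfl | hlt
      · exact subset_rfl
      · exact (ih (Order.lt_add_one_iff.mp hlt)).trans (t.incr p)
  | limit l hl _ =>
      rcases h.eq_or_lt with rfl | hlt
      · exact subset_rfl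
      · rw [t.limit l hl]
        exact Set.subset_biUnion_of_mem hlt

/-- The computation is stationary from the supremum of the stages at which the atoms of the
result appear; this supremum exists because `α` lives in the universe of the ordinals. -/
theorem exists_X_eq_result : ∃ o, t.X o = t.result ∧ t.X (o + 1) = t.result := by
  choose g hg using fun a : t.result => Set.mem_iUnion.mp a.2
  have hsup : t.X (⨆ a, g a) = t.result :=
    (Set.subset_iUnion t.X _).antisymm fun x hx =>
      t.monotone (Ordinal.le_iSup g ⟨x, hx⟩) (hg ⟨x, hx⟩)
  exact ⟨_, hsup, (Set.subset_iUnion t.X _).antisymm (hsup.symm.subset.trans (t.incr _))⟩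

end PComputation

namespace Program

variable {P : Program α} {M : Set α}

theorem Derivable.mem_Tnd (h : P.Derivable M) : M ∈ P.Tnd M := by
  obtain ⟨t, rfl⟩ := h
  obtain ⟨o, ho, ho'⟩ := t.exists_X_eq_result
  simpa only [ho, ho'] using t.step o

theorem Derivable.isModel (h : P.Derivable M) : P.IsModel M :=
  fun r hr hb => h.mem_Tnd.2 r ⟨hr, hb⟩

theorem Derivable.subset_of_MMax (hH : P.Horn) (hm : P.Mono) (h : P.Derivable M) {X : Set α}
    (hX : P.MMax M X) : M ⊆ X := by
  obtain ⟨t, rfl⟩ := h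
  refine Set.iUnion_subset fun o => ?_
  induction o using Ordinal.limitRecOn with
  | zero => simp [t.zero]
  | add_one o ih =>
      exact fun x hx => hX.2.2
        ⟨Set.subset_iUnion t.X _ hx, hset_mono (app_mono hH hm ih) ((t.step o).1 hx)⟩
  | limit o ho ih =>
      rw [t.limit o ho]
      exact Set.iUnion₂_subset ih

end Program

section Canonical

variable {P : Program α} {M : Set α}

theorem canSeq_zero (P : Program α) (M : Set α) : canSeq P M 0 = ∅ :=
  Ordinal.limitRecOn_zero ..

theorem canSeq_add_one (P : Program α) (M : Set α) (o : Ordinal.{u}) :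
    canSeq P M (o + 1) = (P.app (canSeq P M o)).hset ∩ M :=
  Ordinal.limitRecOn_add_one ..

theorem canSeq_limit (P : Program α) (M : Set α) {o : Ordinal.{u}} (h : Order.IsSuccLimit o) :
    canSeq P M o = ⋃ β < o, canSeq P M β :=
  Ordinal.limitRecOn_limit _ _ _ _ h

theorem canSeq_subset (P : Program α) (M : Set α) (o : Ordinal.{u}) : canSeq P M o ⊆ M := by
  induction o using Ordinal.limitRecOn with
  | zero => simp [canSeq_zero]
  | add_one o _ => simp [canSeq_add_one]
  | limit o ho ih =>
      rw [canSeq_limit P M ho]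
      exact Set.iUnion₂_subset ih

theorem canSeq_subset_add_one (hH : P.Horn) (hm : P.Mono) (o : Ordinal.{u}) :
    canSeq P M o ⊆ canSeq P M (o + 1) := by
  induction o using Ordinal.limitRecOn with
  | zero => simp [canSeq_zero]
  | add_one o ih =>
      rw [canSeq_add_one, canSeq_add_one]
      exact Set.inter_subset_inter_left _ (Program.hset_mono (Program.app_mono hH hm ih))
  | limit o ho ih =>
      rw [canSeq_add_one, canSeq_limit P M ho]
      refine Set.iUnion₂_subset fun β hβ => (ih β hβ).trans ?_
      rw [canSeq_add_one]
      exact Set.inter_subset_inter_left _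
        (Program.hset_mono (Program.app_mono hH hm (Set.subset_biUnion_of_mem hβ)))

theorem Program.IsModel.sat_head_hset_app_inter (hH : P.Horn) (hm : P.Mono) (hM : P.IsModel M)
    {S : Set α} (hS : S ⊆ M) {r : Rule α} (hr : r ∈ P.app S) :
    Constraint.Sat ((P.app S).hset ∩ M) r.head := by
  obtain ⟨hrP, hb⟩ := Program.app_mono hH hm hS hr
  refine (Constraint.sat_congr_of_inter_eq (Program.head_dom_subset_hset hr) ?_).mpr (hM r hrP hb)
  rw [Set.inter_right_comm, Set.inter_self, Set.inter_comm]

noncomputable def canComputation (hH : P.Horn) (hm : P.Mono) (hM : P.IsModel M) :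
    PComputation P where
  X := canSeq P M
  zero := canSeq_zero P M
  incr := canSeq_subset_add_one hH hm
  step o := by
    rw [canSeq_add_one]
    exact ⟨Set.inter_subset_left,
      fun _ hr => hM.sat_head_hset_app_inter hH hm (canSeq_subset P M o) hr⟩
  limit _ ho := canSeq_limit P M ho

theorem hset_app_Can_inter (hH : P.Horn) (hm : P.Mono) (hM : P.IsModel M) :
    (P.app (Can P M)).hset ∩ M = Can P M := by
  obtain ⟨o, ho, ho'⟩ := (canComputation hH hm hM).exists_X_eq_result
  change canSeq P M o = Can P M at ho
  change canSeq P M (o + 1) = Can P M at ho'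
  rw [← ho, ← canSeq_add_one, ho', ho]

theorem MMax_Can (hH : P.Horn) (hm : P.Mono) (hM : P.IsModel M) : P.MMax M (Can P M) := by
  have hfix := hset_app_Can_inter hH hm hM
  have hCan : Can P M ⊆ M := Set.iUnion_subset (canSeq_subset P M)
  refine ⟨hCan, fun r hr hb => ?_, fun x hx => hfix ▸ ⟨hx.2, hx.1⟩⟩
  simpa only [hfix] using hM.sat_head_hset_app_inter hH hm hCan ⟨hr, hb⟩

theorem Program.derivable_iff (hH : P.Horn) (hm : P.Mono) :
    P.Derivable M ↔ P.IsModel M ∧ ∀ X, P.MMax M X → X = M :=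
  ⟨fun h => ⟨h.isModel, fun _ hX => hX.1.antisymm (h.subset_of_MMax hH hm hX)⟩,
    fun ⟨hM, huniq⟩ => ⟨canComputation hH hm hM, huniq _ (MMax_Can hH hm hM)⟩⟩

theorem Program.stable_iff (hP : P.Mono) :
    P.Stable M ↔ P.IsModel M ∧ ∀ X, P.SE X M → X = M := by
  rw [Program.Stable, Program.derivable_iff (Program.reduct_horn M) (hP.reduct M),
    Program.isModel_reduct_iff]
  exact and_congr_right fun hM => forall_congr' fun X =>
    ⟨fun h hX => h hX.2.2, fun h hX => h ⟨hX.1, hM, hX⟩⟩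

end Canonical

namespace Program

variable {P Q R : Program α} {X Y D M : Set α}

theorem isModel_union : (P ∪ R).IsModel Y ↔ P.IsModel Y ∧ R.IsModel Y := by
  simp only [IsModel, Set.mem_union, or_imp, forall_and]

theorem reduct_union : (P ∪ R).reduct Y = P.reduct Y ∪ R.reduct Y := by
  ext
  simp only [reduct, Set.mem_union, Set.mem_ofPred_eq]
  grind

theorem app_union : (P ∪ R).app X = P.app X ∪ R.app X :=
  Set.sep_union

theorem hset_union : (P ∪ R).hset = P.hset ∪ R.hset :=
  Set.biUnion_union P R Rule.hset

theorem MMax_union : (P ∪ R).MMax Y X ↔ P.MMax Y X ∧ R.MMax Y X := by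
  simp only [MMax, isModel_union, app_union, hset_union, Set.inter_union_distrib_left,
    Set.union_subset_iff]
  tauto

theorem SE_union : (P ∪ R).SE X Y ↔ P.SE X Y ∧ R.SE X Y := by
  simp only [SE, reduct_union, isModel_union, MMax_union]
  tauto

theorem SE_self_iff : P.SE Y Y ↔ P.IsModel Y :=
  ⟨fun h => h.2.1, fun h => ⟨subset_rfl, h, subset_rfl, isModel_reduct_iff.mpr h,
    Set.inter_subset_left⟩⟩

theorem isModel_factRule : ({factRule D} : Program α).IsModel Y ↔ D ⊆ Y := by
  simp [IsModel, Rule.BodySat, factRule, Constraint.Sat]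

theorem reduct_factRule : ({factRule D} : Program α).reduct Y = {factRule D} := by
  ext
  simp [reduct, factRule, Rule.pos_part]

theorem hset_app_factRule : (({factRule D} : Program α).app X).hset = D := by
  have happ : ({factRule D} : Program α).app X = {factRule D} := by
    ext
    simp +contextual [app, Rule.BodySat, factRule]
  rw [happ, hset, Set.biUnion_singleton]
  rfl

theorem SE_factRule : ({factRule D} : Program α).SE X Y ↔ D ⊆ X ∧ X ⊆ Y := by
  simp only [SE, MMax, reduct_factRule, isModel_factRule, hset_app_factRule]
  exact ⟨fun h => ⟨h.2.2.2.1, h.1⟩, fun ⟨hDX, hXY⟩ =>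
    ⟨hXY, hDX.trans hXY, hXY, hDX, Set.inter_subset_right.trans hDX⟩⟩

theorem mono_factRule : ({factRule D} : Program α).Mono := by
  rintro _ rfl
  refine ⟨fun W Z hW hWZ hZ => ?_, fun A hA => (Set.notMem_empty A hA).elim,
    fun A hA => (Set.notMem_empty A hA).elim⟩
  exact hZ.antisymm ((Set.mem_singleton_iff.mp hW) ▸ hWZ)

theorem stable_union_factRule_iff_SE (hP : P.Mono) :
    (P ∪ {factRule D}).Stable M ↔
      D ⊆ M ∧ P.IsModel M ∧ ∀ X, P.SE X M → D ⊆ X → X = M := by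
  simp only [stable_iff (hP.union mono_factRule), isModel_union, isModel_factRule, SE_union,
    SE_factRule]
  exact ⟨fun ⟨⟨hM, hDM⟩, h⟩ => ⟨hDM, hM, fun X hX hDX => h X ⟨hX, hDX, hX.1⟩⟩,
    fun ⟨hDM, hM, h⟩ => ⟨⟨hM, hDM⟩, fun X hX => h X hX.1 hX.2.1⟩⟩

theorem SE.of_inter_eq {W W' S : Set α} (h : P.SE W Y) (hW' : W' ⊆ Y) (hS : P.atoms ⊆ S)
    (hWS : W' ∩ S = W ∩ S) : P.SE W' Y := by
  obtain ⟨-, hY, -, hWmod, hWmax⟩ := h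
  have hRS : (P.reduct Y).atoms ⊆ S := (reduct_atoms_subset Y).trans hS
  refine ⟨hW', hY, hW', (isModel_congr_of_inter_eq hRS hWS).mpr hWmod, fun x hx => ?_⟩
  rw [app_congr_of_inter_eq hRS hWS] at hx
  have hxS : x ∈ W ∩ S :=
    ⟨hWmax hx, hRS (hset_subset_atoms (hset_mono (app_subset W) hx.2))⟩
  exact (hWS ▸ hxS).1

/-- The trace on `At(P) ∪ {a}`, for an atom `a ∈ Y \ Z`, of an SE-model above `Z` is chosen
maximal among those different from the trace of `Y`; outside these atoms the UE-model agrees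
with `Y`. -/
theorem SE.exists_UE_superset (hfin : P.atoms.Finite) {Z : Set α} (hZ : P.SE Z Y)
    (hZY : Z ≠ Y) : ∃ Z', P.UE Z' Y ∧ Z ⊆ Z' ∧ Z' ≠ Y := by
  obtain ⟨a, haY, haZ⟩ := Set.exists_of_ssubset (hZ.1.ssubset_of_ne hZY)
  set S := insert a P.atoms
  set T : Set (Set α) := {B | ∃ W, P.SE W Y ∧ Z ⊆ W ∧ W ∩ S = B} \ {Y ∩ S}
  have hTfin : T.Finite := (hfin.insert a).finite_subsets.subset <| by
    rintro _ ⟨⟨W, -, -, rfl⟩, -⟩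
    exact Set.inter_subset_right
  have hZT : Z ∩ S ∈ T :=
    ⟨⟨Z, hZ, subset_rfl, rfl⟩, fun h => haZ ((h ▸ ⟨haY, .inl rfl⟩ : a ∈ Z ∩ S)).1⟩
  obtain ⟨_, ⟨⟨W, hW, hZW, rfl⟩, hWS⟩, hmax⟩ := hTfin.exists_maximal ⟨_, hZT⟩
  have hZ'S : (W ∪ Y \ S) ∩ S = W ∩ S := by
    rw [Set.union_inter_distrib_right, Set.sdiff_inter_self, Set.union_empty]
  have hZ' : P.SE (W ∪ Y \ S) Y :=
    hW.of_inter_eq (Set.union_subset hW.1 Set.sdiff_subset) (Set.subset_insert a _) hZ'S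
  refine ⟨W ∪ Y \ S, ⟨hZ', fun X hX hZ'X => ?_⟩, hZW.trans Set.subset_union_left,
    fun h => hWS (h ▸ hZ'S).symm⟩
  by_cases hXS : X ∩ S = Y ∩ S
  · refine .inr (hX.1.antisymm ?_)
    rw [← Set.inter_union_sdiff Y S, ← hXS]
    exact Set.union_subset Set.inter_subset_left (Set.subset_union_right.trans hZ'X)
  · have hWX : W ∩ S ⊆ X ∩ S := hZ'S ▸ Set.inter_subset_inter_left S hZ'X
    have hXT : X ∩ S ∈ T :=
      ⟨⟨X, hX, (hZW.trans Set.subset_union_left).trans hZ'X, rfl⟩, hXS⟩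
    have hXW : X ∩ S = W ∩ S := (hmax hXT hWX).antisymm hWX
    refine .inl (hZ'X.antisymm ?_)
    rw [← Set.inter_union_sdiff X S, hXW]
    exact Set.union_subset_union Set.inter_subset_left (Set.sdiff_subset_sdiff_left hX.1)

theorem UE_self_iff : P.UE Y Y ↔ P.IsModel Y :=
  ⟨fun h => SE_self_iff.mp h.1,
    fun h => ⟨SE_self_iff.mpr h, fun _ hX hYX => .inr (hX.1.antisymm hYX)⟩⟩

def UniqueUEAbove (P : Program α) (D M : Set α) : Prop :=
  D ⊆ M ∧ P.UE M M ∧ ∀ X, P.UE X M → D ⊆ X → X = M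

theorem stable_union_factRule_iff (hP : P.Mono) (hfin : P.atoms.Finite) :
    (P ∪ {factRule D}).Stable M ↔ P.UniqueUEAbove D M := by
  rw [stable_union_factRule_iff_SE hP, UniqueUEAbove, UE_self_iff]
  refine and_congr_right' <| and_congr_right fun _ =>
    ⟨fun h X hX => h X hX.1, fun h X hX hDX => ?_⟩
  by_contra hXM
  obtain ⟨Z, hZ, hXZ, hZM⟩ := hX.exists_UE_superset hfin hXM
  exact hZM (h Z hZ (hDX.trans hXZ))

theorem not_uniqueUEAbove_iff (hY : P.UE Y Y) (hDY : D ⊆ Y) :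
    ¬ P.UniqueUEAbove D Y ↔ ∃ X, P.UE X Y ∧ D ⊆ X ∧ X ≠ Y := by
  simp [UniqueUEAbove, hY, hDY]

theorem UE.UE_self (h : P.UE X Y) : P.UE Y Y :=
  UE_self_iff.mpr h.1.2.1

/-- Unless `X = Y`, the fact `X` exhibits a UE-model `(Z, Y)` of `Q` with `X ⊆ Z ≠ Y`, and
then the fact `Z` a UE-model `(W, Y)` of `P` with `Z ⊆ W ≠ Y`; maximality of `X` forces
`X = W = Z`. -/
theorem UE_of_forall_uniqueUEAbove_iff (h : ∀ D M, P.UniqueUEAbove D M ↔ Q.UniqueUEAbove D M)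
    (hXY : P.UE X Y) : Q.UE X Y := by
  have hYQ : Q.UE Y Y := ((h Y Y).mp ⟨subset_rfl, hXY.UE_self, fun X hX hYX =>
    hX.1.1.antisymm hYX⟩).2.1
  by_cases hXY' : X = Y
  · exact hXY' ▸ hYQ
  obtain ⟨Z, hZ, hXZ, hZY⟩ := (not_uniqueUEAbove_iff hYQ hXY.1.1).mp fun hQ =>
    hXY' (((h X Y).mpr hQ).2.2 X hXY subset_rfl)
  obtain ⟨W, hW, hZW, hWY⟩ := (not_uniqueUEAbove_iff hXY.UE_self hZ.1.1).mp fun hP =>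
    hZY (((h Z Y).mp hP).2.2 Z hZ subset_rfl)
  obtain rfl : X = W := (hXY.2 W hW.1 (hXZ.trans hZW)).resolve_right hWY
  exact (hXZ.antisymm hZW) ▸ hZ

end Program

/-- Uniform equivalence is characterized by equality of UE-models
(for programs over finitely many atoms). -/
theorem unif_equiv_iff_ue {α : Type u} (P Q : Program α) (hP : P.Mono) (hQ : Q.Mono)
    (hfin : (P.atoms ∪ Q.atoms).Finite) :
    UnifEq P Q ↔ ∀ X Y : Set α, P.UE X Y ↔ Q.UE X Y := by
  have hfinP : P.atoms.Finite := hfin.subset Set.subset_union_left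
  have hfinQ : Q.atoms.Finite := hfin.subset Set.subset_union_right
  have hUnifEq : UnifEq P Q ↔ ∀ D M, P.UniqueUEAbove D M ↔ Q.UniqueUEAbove D M := by
    simp only [UnifEq, Program.stable_union_factRule_iff hP hfinP,
      Program.stable_union_factRule_iff hQ hfinQ]
  rw [hUnifEq]
  refine ⟨fun h X Y => ⟨Program.UE_of_forall_uniqueUEAbove_iff h,
    Program.UE_of_forall_uniqueUEAbove_iff fun D M => (h D M).symm⟩, fun h D M => ?_⟩
  simp only [Program.UniqueUEAbove, h]
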